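/- (One-step Lyapunov monotonicity.) Suppose W satisfies w_{ij} = 1 for all j ≥ i, U := W − euᵀ is symmetric for some u ∈ ℝ^m, β ≥ ρ > 0, α ≥ 1, P̂ := P − D_Hᵀ((W − euᵀ + αuuᵀ) ⊗ I)D_H − β D_Aᵀ((W − euᵀ + αuuᵀ) ⊗ I)D_A is positive semidefinite, the sequence {(x^k, λ^k)}_{k≥1} is generated by the algorithm, and (x*, λ*) satisfies the KKT conditions. Then for every k ≥ 1: (1/(2ρ))‖λ^{k+1} − λ*‖² + (1/2)(‖x^{k+1} − x*‖_P² − ‖y^{k+1} − y*‖_V² − β‖z^{k+1} − z*‖_V²) ≤ (1/(2ρ))‖λ^k − λ*‖² + (1/2)(‖x^k − x*‖_P² − ‖y^k − y*‖_V² − β‖z^k − z*‖_V²). -/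

import Mathlib

open Matrix Finset Filter Topology

/-- For a block matrix `M = (M_1,…,M_m)` and a block vector `x = (x_1,…,x_m)`,
`blkMulVec M x = Σ_i M_i x_i` (i.e. `Mx` for the concatenated matrix/vector). -/
noncomputable def blkMulVec {m r : ℕ} {n : Fin m → ℕ}
    (M : ∀ i : Fin m, Matrix (Fin r) (Fin (n i)) ℝ)
    (x : ∀ i : Fin m, Fin (n i) → ℝ) : Fin r → ℝ :=
  ∑ i, M i *ᵥ x i

/-- The objective `F(x) = (1/2) xᵀQx + Σ_i g_i(x_i)` where `Q = HᵀH`,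
so `F(x) = (1/2)‖Hx‖² + Σ_i g_i(x_i)`. -/
noncomputable def Fobj {m q : ℕ} {n : Fin m → ℕ}
    (H : ∀ i : Fin m, Matrix (Fin q) (Fin (n i)) ℝ)
    (g : ∀ i : Fin m, (Fin (n i) → ℝ) → ℝ)
    (x : ∀ i : Fin m, Fin (n i) → ℝ) : ℝ :=
  (1 / 2) * (blkMulVec H x ⬝ᵥ blkMulVec H x) + ∑ i, g i (x i)

/-- `‖x‖_P²` for the block-diagonal matrix `P = blkdiag(P_1,…,P_m)`:
`‖x‖_P² = Σ_i x_iᵀ P_i x_i`. -/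
noncomputable def normPSq {m : ℕ} {n : Fin m → ℕ}
    (P : ∀ i : Fin m, Matrix (Fin (n i)) (Fin (n i)) ℝ)
    (x : ∀ i : Fin m, Fin (n i) → ℝ) : ℝ :=
  ∑ i, x i ⬝ᵥ (P i *ᵥ x i)

/-- `‖y‖_V²` for a block vector `y = (y_1,…,y_m)`, where `V = U ⊗ I` with
`U := W − euᵀ` (so `U_{ij} = W_{ij} − u_j`): `‖y‖_V² = Σ_{i,j} U_{ij} ⟨y_i, y_j⟩`. -/
noncomputable def normVSq {m r : ℕ} (W : Matrix (Fin m) (Fin m) ℝ) (u : Fin m → ℝ)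
    (y : Fin m → Fin r → ℝ) : ℝ :=
  ∑ i, ∑ j, (W i j - u j) * (y i ⬝ᵥ y j)

/-- The quadratic form `v ↦ vᵀ D_Bᵀ (M ⊗ I) D_B v = Σ_{i,j} M_{ij} ⟨B_i v_i, B_j v_j⟩`
for a block-diagonal matrix `D_B = blkdiag(B_1,…,B_m)` and `M ∈ ℝ^{m×m}`. -/
noncomputable def quadKron {m r : ℕ} {n : Fin m → ℕ} (M : Matrix (Fin m) (Fin m) ℝ)
    (B : ∀ i : Fin m, Matrix (Fin r) (Fin (n i)) ℝ)
    (v : ∀ i : Fin m, Fin (n i) → ℝ) : ℝ :=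
  ∑ i, ∑ j, M i j * ((B i *ᵥ v i) ⬝ᵥ (B j *ᵥ v j))

/-- The point `x̂^{k,i}` with blocks `x̂_j^{k,i} = x_j^{k+1} − w_{ij}(x_j^{k+1} − x_j^k)`. -/
noncomputable def xhat {m : ℕ} {n : Fin m → ℕ} (W : Matrix (Fin m) (Fin m) ℝ)
    (xk xk1 : ∀ i : Fin m, Fin (n i) → ℝ) (i : Fin m) :
    ∀ j : Fin m, Fin (n j) → ℝ :=
  fun j => xk1 j - W i j • (xk1 j - xk j)

/-- One iteration of the hybrid Jacobian/Gauss-Seidel proximal BCU method: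
for each `i`, `x_i^{k+1}` minimizes
`⟨∇_i f(x̂^{k,i}) − A_iᵀ(λ^k − β(Ax̂^{k,i} − b)), x_i⟩ + g_i(x_i) + (1/2)‖x_i − x_i^k‖_{P_i}²`
(where `f(x) = (1/2)‖Hx‖²`, so `∇_i f(x̂) = H_iᵀ(Hx̂)`), and
`λ^{k+1} = λ^k − ρ(Ax^{k+1} − b)`. -/
noncomputable def Iter {m q p : ℕ} {n : Fin m → ℕ}
    (H : ∀ i : Fin m, Matrix (Fin q) (Fin (n i)) ℝ)
    (A : ∀ i : Fin m, Matrix (Fin p) (Fin (n i)) ℝ)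
    (b : Fin p → ℝ)
    (g : ∀ i : Fin m, (Fin (n i) → ℝ) → ℝ)
    (P : ∀ i : Fin m, Matrix (Fin (n i)) (Fin (n i)) ℝ)
    (W : Matrix (Fin m) (Fin m) ℝ)
    (β ρ : ℝ)
    (xk xk1 : ∀ i : Fin m, Fin (n i) → ℝ)
    (lamk lamk1 : Fin p → ℝ) : Prop :=
  (∀ i : Fin m, ∀ ξ : Fin (n i) → ℝ,
      ((H i)ᵀ *ᵥ blkMulVec H (xhat W xk xk1 i)
          - (A i)ᵀ *ᵥ (lamk - β • (blkMulVec A (xhat W xk xk1 i) - b))) ⬝ᵥ xk1 i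
        + g i (xk1 i)
        + (1 / 2) * ((xk1 i - xk i) ⬝ᵥ (P i *ᵥ (xk1 i - xk i)))
      ≤ ((H i)ᵀ *ᵥ blkMulVec H (xhat W xk xk1 i)
          - (A i)ᵀ *ᵥ (lamk - β • (blkMulVec A (xhat W xk xk1 i) - b))) ⬝ᵥ ξ
        + g i ξ
        + (1 / 2) * ((ξ - xk i) ⬝ᵥ (P i *ᵥ (ξ - xk i))))
  ∧ lamk1 = lamk - ρ • (blkMulVec A xk1 - b)

/-!
The per-block proximal steps, summed over the blocks and compared with the KKT inequality at
`x^{k+1}`, bound the decrease of `‖x − x*‖_P²`. The gradients are evaluated at the partially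
updated points `x̂^{k,i}`; since `U = W − euᵀ` is symmetric, the resulting cross terms are
polarized into the `V`-seminorms of `y^{k+1} − y*`, `y^{k+1} − y^k`, `y^k − y*` (and likewise
for `z`) plus a rank-one remainder along `u`. Young's inequality absorbs that remainder into the
`αuuᵀ` part of `P̂ ⪰ 0`, which also pays for the `‖x^{k+1} − x^k‖_P²` term, and the dual update
contributes `(ρ/2)‖Ax^{k+1} − b‖²`, dominated by the `(β/2)‖Ax^{k+1} − b‖²` gained since `ρ ≤ β`.
-/

theorem dotProduct_self_nonneg {r : Type*} [Fintype r] (v : r → ℝ) : 0 ≤ v ⬝ᵥ v :=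
  Finset.sum_nonneg fun i _ => mul_self_nonneg (v i)

theorem dotProduct_le_half_add {r : Type*} [Fintype r] (a b : r → ℝ) :
    a ⬝ᵥ b ≤ 1 / 2 * (a ⬝ᵥ a) + 1 / 2 * (b ⬝ᵥ b) := by
  have h : 0 ≤ (a - b) ⬝ᵥ (a - b) := dotProduct_self_nonneg _
  simp only [sub_dotProduct, dotProduct_sub, dotProduct_comm b a] at h
  linarith

theorem dotProduct_sub_smul_self {r : Type*} [Fintype r] (v w : r → ℝ) (ρ : ℝ) :
    (v - ρ • w) ⬝ᵥ (v - ρ • w) = v ⬝ᵥ v - 2 * ρ * (v ⬝ᵥ w) + ρ ^ 2 * (w ⬝ᵥ w) := by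
  simp only [sub_dotProduct, dotProduct_sub, smul_dotProduct, dotProduct_smul, smul_eq_mul,
    dotProduct_comm w v]
  ring

theorem ConvexOn.add_quadraticMap_le_of_isMinOn {E : Type*} [AddCommGroup E] [Module ℝ E]
    {h : E → ℝ} (hh : ConvexOn ℝ Set.univ h) (Q : QuadraticMap ℝ E ℝ) {x₀ a : E}
    (hmin : IsMinOn (fun ξ => h ξ + Q (ξ - x₀)) Set.univ a) (ξ : E) :
    h a + Q (a - x₀) + Q (ξ - a) ≤ h ξ + Q (ξ - x₀) := by
  set e := a - x₀
  set d := ξ - a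
  -- comparing `a` with `a + t • d` and dividing by `t`
  have hslope : ∀ t ∈ Set.Ioo (0 : ℝ) 1,
      0 ≤ h ξ - h a + QuadraticMap.polar Q e d + t * Q d := by
    rintro t ⟨ht0, ht1⟩
    have hmt : h a + Q e ≤ h (a + t • d) + Q (e + t • d) := by
      simpa [e, d, add_sub_right_comm] using hmin (Set.mem_univ (a + t • d))
    have hconv : h (a + t • d) ≤ (1 - t) * h a + t * h ξ := by
      have hseg : a + t • d = (1 - t) • a + t • ξ := by
        simp only [d, smul_sub, sub_smul, one_smul]; abel
      rw [hseg]
      exact hh.2 (Set.mem_univ a) (Set.mem_univ ξ) (by linarith) ht0.le (by ring)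
    rw [QuadraticMap.map_add (⇑Q), QuadraticMap.map_smul, QuadraticMap.polar_smul_right,
      smul_eq_mul, smul_eq_mul] at hmt
    have : 0 ≤ t * (h ξ - h a + QuadraticMap.polar Q e d + t * Q d) := by nlinarith
    exact nonneg_of_mul_nonneg_right this ht0
  have hlim : Tendsto (fun t : ℝ => h ξ - h a + QuadraticMap.polar Q e d + t * Q d) (𝓝[>] 0)
      (𝓝 (h ξ - h a + QuadraticMap.polar Q e d)) :=
    (Continuous.tendsto' (by fun_prop) 0 _ (by simp)).mono_left nhdsWithin_le_nhds
  have hpolar : 0 ≤ h ξ - h a + QuadraticMap.polar Q e d :=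
    ge_of_tendsto hlim (Filter.mem_of_superset (Ioo_mem_nhdsGT one_pos) hslope)
  have hsplit : ξ - x₀ = e + d := by simp only [e, d]; abel
  rw [hsplit, QuadraticMap.map_add (⇑Q)]
  linarith

theorem Matrix.toQuadraticForm'_apply {ι : Type*} [Fintype ι] [DecidableEq ι]
    (P : Matrix ι ι ℝ) (v : ι → ℝ) : P.toQuadraticForm' v = v ⬝ᵥ (P *ᵥ v) :=
  Matrix.toLinearMap₂'_apply' _ _ _

theorem prox_three_point {ι : Type*} [Fintype ι] [DecidableEq ι] {c : ι → ℝ}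
    {g : (ι → ℝ) → ℝ} (hg : ConvexOn ℝ Set.univ g) (P : Matrix ι ι ℝ) {x₀ a : ι → ℝ}
    (hmin : ∀ ξ, c ⬝ᵥ a + g a + 1 / 2 * ((a - x₀) ⬝ᵥ (P *ᵥ (a - x₀)))
      ≤ c ⬝ᵥ ξ + g ξ + 1 / 2 * ((ξ - x₀) ⬝ᵥ (P *ᵥ (ξ - x₀)))) (ξ : ι → ℝ) :
    c ⬝ᵥ (a - ξ) + g a + 1 / 2 * ((a - x₀) ⬝ᵥ (P *ᵥ (a - x₀)))
        + 1 / 2 * ((a - ξ) ⬝ᵥ (P *ᵥ (a - ξ)))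
      ≤ g ξ + 1 / 2 * ((x₀ - ξ) ⬝ᵥ (P *ᵥ (x₀ - ξ))) := by
  have hconv : ConvexOn ℝ Set.univ (fun ξ => c ⬝ᵥ ξ + g ξ) :=
    ((dotProductBilin ℝ ℝ c).convexOn convex_univ).add hg
  have := hconv.add_quadraticMap_le_of_isMinOn ((1 / 2 : ℝ) • P.toQuadraticForm')
    (fun ξ _ => by simpa [Matrix.toQuadraticForm'_apply] using hmin ξ) ξ
  rw [QuadraticMap.map_sub _ ξ a, QuadraticMap.map_sub _ ξ x₀] at this
  simp only [_root_.smul_apply, Matrix.toQuadraticForm'_apply, smul_eq_mul] at this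
  rw [dotProduct_sub]
  linarith

theorem sum_prox_le {m : ℕ} {n : Fin m → ℕ} {c : ∀ i : Fin m, Fin (n i) → ℝ}
    {g : ∀ i : Fin m, (Fin (n i) → ℝ) → ℝ} (hg : ∀ i, ConvexOn ℝ Set.univ (g i))
    (P : ∀ i : Fin m, Matrix (Fin (n i)) (Fin (n i)) ℝ) {xk xk1 : ∀ i : Fin m, Fin (n i) → ℝ}
    (hmin : ∀ i ξ, c i ⬝ᵥ xk1 i + g i (xk1 i) + 1 / 2 * ((xk1 i - xk i) ⬝ᵥ (P i *ᵥ (xk1 i - xk i)))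
      ≤ c i ⬝ᵥ ξ + g i ξ + 1 / 2 * ((ξ - xk i) ⬝ᵥ (P i *ᵥ (ξ - xk i))))
    (xs : ∀ i : Fin m, Fin (n i) → ℝ) :
    ∑ i, c i ⬝ᵥ (xk1 i - xs i) + ∑ i, g i (xk1 i) + 1 / 2 * normPSq P (xk1 - xk)
        + 1 / 2 * normPSq P (xk1 - xs)
      ≤ ∑ i, g i (xs i) + 1 / 2 * normPSq P (xk - xs) := by
  have := Finset.sum_le_sum fun i (_ : i ∈ Finset.univ) =>
    prox_three_point (hg i) (P i) (hmin i) (xs i)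
  simpa only [normPSq, Pi.sub_apply, Finset.sum_add_distrib, ← Finset.mul_sum] using this

/-- `D_B x`, the family of blocks `B_i x_i`; thus `y = blkImage H x` and `z = blkImage A x`. -/
def blkImage {m r : ℕ} {n : Fin m → ℕ} (B : ∀ i : Fin m, Matrix (Fin r) (Fin (n i)) ℝ)
    (x : ∀ i : Fin m, Fin (n i) → ℝ) : Fin m → Fin r → ℝ :=
  fun i => B i *ᵥ x i

section Blocks

variable {m r : ℕ} {n : Fin m → ℕ} (B : ∀ i : Fin m, Matrix (Fin r) (Fin (n i)) ℝ)

theorem blkImage_sub (x y : ∀ i : Fin m, Fin (n i) → ℝ) :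
    blkImage B (x - y) = blkImage B x - blkImage B y :=
  funext fun i => mulVec_sub (B i) (x i) (y i)

theorem blkMulVec_sub (x y : ∀ i : Fin m, Fin (n i) → ℝ) :
    blkMulVec B (x - y) = blkMulVec B x - blkMulVec B y := by
  simp only [blkMulVec, Pi.sub_apply, mulVec_sub, Finset.sum_sub_distrib]

theorem sum_blkImage_sub (x y : ∀ i : Fin m, Fin (n i) → ℝ) :
    ∑ i, (blkImage B x - blkImage B y) i = blkMulVec B x - blkMulVec B y :=
  Finset.sum_sub_distrib _ _

theorem sum_transpose_mulVec_dotProduct (v : Fin r → ℝ) (x : ∀ i : Fin m, Fin (n i) → ℝ) :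
    ∑ i, ((B i)ᵀ *ᵥ v) ⬝ᵥ x i = v ⬝ᵥ blkMulVec B x := by
  simp only [blkMulVec, dotProduct_sum, mulVec_transpose, dotProduct_mulVec]

theorem blkMulVec_xhat_sub (W : Matrix (Fin m) (Fin m) ℝ) (xk xk1 xs : ∀ i : Fin m, Fin (n i) → ℝ)
    (i : Fin m) :
    blkMulVec B (xhat W xk xk1 i) - blkMulVec B xs
      = blkMulVec B xk1 - blkMulVec B xs
        - ∑ j, W i j • (blkImage B xk1 - blkImage B xk) j := by
  simp only [blkMulVec, xhat, blkImage, Pi.sub_apply, mulVec_sub, mulVec_smul,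
    ← Finset.sum_sub_distrib]
  exact Finset.sum_congr rfl fun j _ => by abel

end Blocks

section VSeminorm

variable {m r : ℕ} (W : Matrix (Fin m) (Fin m) ℝ) (u : Fin m → ℝ)

theorem normVSq_sub (hU : ∀ i j, W i j - u j = W j i - u i) (a δ : Fin m → Fin r → ℝ) :
    normVSq W u (a - δ)
      = normVSq W u a + normVSq W u δ - 2 * ∑ i, ∑ j, (W i j - u j) * (a i ⬝ᵥ δ j) := by
  have hswap : ∑ i, ∑ j, (W i j - u j) * (δ i ⬝ᵥ a j)
      = ∑ i, ∑ j, (W i j - u j) * (a i ⬝ᵥ δ j) := by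
    rw [Finset.sum_comm]
    exact Finset.sum_congr rfl fun i _ => Finset.sum_congr rfl fun j _ => by
      rw [hU j i, dotProduct_comm]
  simp only [normVSq, Pi.sub_apply, sub_dotProduct, dotProduct_sub, mul_sub,
    Finset.sum_sub_distrib]
  linarith

theorem sum_weighted_dotProduct_eq (hU : ∀ i j, W i j - u j = W j i - u i)
    (a δ : Fin m → Fin r → ℝ) :
    ∑ i, (∑ j, W i j • δ j) ⬝ᵥ a i
      = 1 / 2 * (normVSq W u a + normVSq W u δ - normVSq W u (a - δ))
        + (∑ j, u j • δ j) ⬝ᵥ ∑ i, a i := by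
  have hcross : ∑ i, (∑ j, W i j • δ j) ⬝ᵥ a i = ∑ i, ∑ j, W i j * (a i ⬝ᵥ δ j) := by
    simp only [sum_dotProduct, smul_dotProduct, smul_eq_mul, dotProduct_comm (δ _)]
  have hrank : (∑ j, u j • δ j) ⬝ᵥ ∑ i, a i = ∑ i, ∑ j, u j * (a i ⬝ᵥ δ j) := by
    rw [sum_dotProduct, Finset.sum_comm]
    simp only [dotProduct_sum, smul_dotProduct, smul_eq_mul, dotProduct_comm (δ _)]
  rw [normVSq_sub W u hU, hcross, hrank]
  simp only [sub_mul, Finset.sum_sub_distrib]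
  ring

theorem quadKron_eq_normVSq_add (α : ℝ) {n : Fin m → ℕ}
    (B : ∀ i : Fin m, Matrix (Fin r) (Fin (n i)) ℝ)
    (v : ∀ i : Fin m, Fin (n i) → ℝ) :
    quadKron (fun i j => W i j - u j + α * (u i * u j)) B v
      = normVSq W u (blkImage B v)
        + α * ((∑ i, u i • blkImage B v i) ⬝ᵥ ∑ j, u j • blkImage B v j) := by
  simp only [quadKron, normVSq, blkImage, sum_dotProduct, dotProduct_sum, smul_dotProduct,
    dotProduct_smul, smul_eq_mul, Finset.mul_sum, ← Finset.sum_add_distrib]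
  exact Finset.sum_congr rfl fun i _ => Finset.sum_congr rfl fun j _ => by
    rw [dotProduct_comm (B j *ᵥ v j)]; ring

end VSeminorm

section Iteration

variable {m q p : ℕ} {n : Fin m → ℕ}
  (H : ∀ i : Fin m, Matrix (Fin q) (Fin (n i)) ℝ) (A : ∀ i : Fin m, Matrix (Fin p) (Fin (n i)) ℝ)
  (b : Fin p → ℝ) (W : Matrix (Fin m) (Fin m) ℝ) (u : Fin m → ℝ) (β : ℝ)
  (xk xk1 xs : ∀ i : Fin m, Fin (n i) → ℝ) (lamk : Fin p → ℝ)

/-- The linear coefficient of the `i`-th block update in `Iter`. -/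
noncomputable def iterGrad (i : Fin m) : Fin (n i) → ℝ :=
  (H i)ᵀ *ᵥ blkMulVec H (xhat W xk xk1 i)
    - (A i)ᵀ *ᵥ (lamk - β • (blkMulVec A (xhat W xk xk1 i) - b))

theorem sum_xhat_dotProduct {r : ℕ} (B : ∀ i : Fin m, Matrix (Fin r) (Fin (n i)) ℝ)
    (hU : ∀ i j, W i j - u j = W j i - u i) :
    ∑ i, (blkMulVec B (xhat W xk xk1 i) - blkMulVec B xs) ⬝ᵥ (blkImage B xk1 - blkImage B xs) i
      = (blkMulVec B xk1 - blkMulVec B xs) ⬝ᵥ (blkMulVec B xk1 - blkMulVec B xs)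
        - 1 / 2 * (normVSq W u (blkImage B xk1 - blkImage B xs)
          + normVSq W u (blkImage B xk1 - blkImage B xk)
          - normVSq W u (blkImage B xk - blkImage B xs))
        - (∑ j, u j • (blkImage B xk1 - blkImage B xk) j)
          ⬝ᵥ (blkMulVec B xk1 - blkMulVec B xs) := by
  simp only [blkMulVec_xhat_sub, sub_dotProduct, Finset.sum_sub_distrib, ← dotProduct_sum]
  rw [sum_weighted_dotProduct_eq W u hU, sum_blkImage_sub, sub_sub_sub_cancel_left]
  ring

theorem sum_iterGrad_dotProduct (hAs : blkMulVec A xs = b) :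
    ∑ i, iterGrad H A b W β xk xk1 lamk i ⬝ᵥ (xk1 i - xs i)
      = ∑ i, (blkMulVec H (xhat W xk xk1 i) - blkMulVec H xs)
            ⬝ᵥ (blkImage H xk1 - blkImage H xs) i
        + blkMulVec H xs ⬝ᵥ (blkMulVec H xk1 - blkMulVec H xs)
        - lamk ⬝ᵥ (blkMulVec A xk1 - b)
        + β * ∑ i, (blkMulVec A (xhat W xk xk1 i) - blkMulVec A xs)
            ⬝ᵥ (blkImage A xk1 - blkImage A xs) i := by
  have hterm : ∀ i, iterGrad H A b W β xk xk1 lamk i ⬝ᵥ (xk1 i - xs i)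
      = (blkMulVec H (xhat W xk xk1 i) - blkMulVec H xs) ⬝ᵥ (blkImage H xk1 - blkImage H xs) i
        + blkMulVec H xs ⬝ᵥ (blkImage H xk1 - blkImage H xs) i
        - lamk ⬝ᵥ (blkImage A xk1 - blkImage A xs) i
        + β * ((blkMulVec A (xhat W xk xk1 i) - blkMulVec A xs)
          ⬝ᵥ (blkImage A xk1 - blkImage A xs) i) := by
    intro i
    simp only [iterGrad, ← hAs, Pi.sub_apply, blkImage, sub_dotProduct,
      mulVec_transpose, ← dotProduct_mulVec, mulVec_sub, dotProduct_sub, smul_dotProduct,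
      smul_eq_mul]
    ring
  rw [Finset.sum_congr rfl fun i _ => hterm i]
  simp only [Finset.sum_add_distrib, Finset.sum_sub_distrib, ← Finset.mul_sum, ← dotProduct_sum]
  rw [sum_blkImage_sub, sum_blkImage_sub, hAs]

end Iteration

noncomputable def primalLyapunov {m q p : ℕ} {n : Fin m → ℕ}
    (P : ∀ i : Fin m, Matrix (Fin (n i)) (Fin (n i)) ℝ)
    (H : ∀ i : Fin m, Matrix (Fin q) (Fin (n i)) ℝ) (A : ∀ i : Fin m, Matrix (Fin p) (Fin (n i)) ℝ)
    (W : Matrix (Fin m) (Fin m) ℝ) (u : Fin m → ℝ) (β : ℝ) (xs x : ∀ i : Fin m, Fin (n i) → ℝ) :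
    ℝ :=
  normPSq P (x - xs) - normVSq W u (blkImage H x - blkImage H xs)
    - β * normVSq W u (blkImage A x - blkImage A xs)

theorem primalLyapunov_descent {m q p : ℕ} {n : Fin m → ℕ}
    {H : ∀ i : Fin m, Matrix (Fin q) (Fin (n i)) ℝ} {A : ∀ i : Fin m, Matrix (Fin p) (Fin (n i)) ℝ}
    {b : Fin p → ℝ} {g : ∀ i : Fin m, (Fin (n i) → ℝ) → ℝ} (hg : ∀ i, ConvexOn ℝ Set.univ (g i))
    {P : ∀ i : Fin m, Matrix (Fin (n i)) (Fin (n i)) ℝ} {W : Matrix (Fin m) (Fin m) ℝ}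
    {u : Fin m → ℝ} (hU : ∀ i j, W i j - u j = W j i - u i) {α β : ℝ} (hα : 1 ≤ α) (hβ : 0 ≤ β)
    (hPhat : ∀ v, 0 ≤ normPSq P v - quadKron (fun i j => W i j - u j + α * (u i * u j)) H v
      - β * quadKron (fun i j => W i j - u j + α * (u i * u j)) A v)
    {xk xk1 xs : ∀ i : Fin m, Fin (n i) → ℝ} {lamk ls : Fin p → ℝ}
    (hmin : ∀ i ξ, iterGrad H A b W β xk xk1 lamk i ⬝ᵥ xk1 i + g i (xk1 i)
        + 1 / 2 * ((xk1 i - xk i) ⬝ᵥ (P i *ᵥ (xk1 i - xk i)))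
      ≤ iterGrad H A b W β xk xk1 lamk i ⬝ᵥ ξ + g i ξ + 1 / 2 * ((ξ - xk i) ⬝ᵥ (P i *ᵥ (ξ - xk i))))
    (hAs : blkMulVec A xs = b)
    (hkkt : ∀ x, Fobj H g xs + ∑ i, ((A i)ᵀ *ᵥ ls) ⬝ᵥ (x i - xs i) ≤ Fobj H g x) :
    1 / 2 * primalLyapunov P H A W u β xs xk1
        + β / 2 * ((blkMulVec A xk1 - b) ⬝ᵥ (blkMulVec A xk1 - b))
      ≤ 1 / 2 * primalLyapunov P H A W u β xs xk + (lamk - ls) ⬝ᵥ (blkMulVec A xk1 - b) := by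
  have hprox := sum_prox_le hg P hmin xs
  rw [sum_iterGrad_dotProduct H A b W β xk xk1 xs lamk hAs, sum_xhat_dotProduct W u xk xk1 xs H hU,
    sum_xhat_dotProduct W u xk xk1 xs A hU, hAs] at hprox
  have hlin : ∑ i, ((A i)ᵀ *ᵥ ls) ⬝ᵥ (xk1 i - xs i) = ls ⬝ᵥ (blkMulVec A xk1 - b) := by
    rw [← hAs, ← blkMulVec_sub]
    exact sum_transpose_mulVec_dotProduct A ls (xk1 - xs)
  have hkkt_xk1 := hkkt xk1
  rw [hlin] at hkkt_xk1
  have hPΔ := hPhat (xk1 - xk)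
  rw [quadKron_eq_normVSq_add, quadKron_eq_normVSq_add, blkImage_sub, blkImage_sub] at hPΔ
  have hY : blkMulVec H xk1 = blkMulVec H xs + (blkMulVec H xk1 - blkMulVec H xs) := by abel
  set eH := blkMulVec H xk1 - blkMulVec H xs
  set r := blkMulVec A xk1 - b
  set dH := ∑ j, u j • (blkImage H xk1 - blkImage H xk) j
  set dA := ∑ j, u j • (blkImage A xk1 - blkImage A xk) j
  rw [Fobj, Fobj, hY] at hkkt_xk1
  simp only [add_dotProduct, dotProduct_add, dotProduct_comm eH] at hkkt_xk1
  have hyH := dotProduct_le_half_add dH eH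
  have hyA := mul_le_mul_of_nonneg_left (dotProduct_le_half_add dA r) hβ
  have hdH : 0 ≤ (α - 1) * (dH ⬝ᵥ dH) :=
    mul_nonneg (by linarith) (dotProduct_self_nonneg _)
  have hdA : 0 ≤ β * ((α - 1) * (dA ⬝ᵥ dA)) :=
    mul_nonneg hβ (mul_nonneg (by linarith) (dotProduct_self_nonneg _))
  unfold primalLyapunov
  rw [sub_dotProduct lamk ls]
  linarith

theorem stmt_12_general {m q p : ℕ} {n : Fin m → ℕ}
    (H : ∀ i : Fin m, Matrix (Fin q) (Fin (n i)) ℝ)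
    (A : ∀ i : Fin m, Matrix (Fin p) (Fin (n i)) ℝ)
    (b : Fin p → ℝ)
    (g : ∀ i : Fin m, (Fin (n i) → ℝ) → ℝ)
    (hg : ∀ i : Fin m, ConvexOn ℝ Set.univ (g i))
    (P : ∀ i : Fin m, Matrix (Fin (n i)) (Fin (n i)) ℝ)
    (W : Matrix (Fin m) (Fin m) ℝ) (u : Fin m → ℝ)
    (hU : ∀ i j : Fin m, W i j - u j = W j i - u i)       -- U := W − euᵀ symmetric
    (β ρ α : ℝ) (hρ : 0 < ρ) (hβρ : ρ ≤ β) (hα : 1 ≤ α)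
    (x : ℕ → ∀ i : Fin m, Fin (n i) → ℝ) (lam : ℕ → Fin p → ℝ)
    (hiter : ∀ k : ℕ, 1 ≤ k →
      Iter H A b g P W β ρ (x k) (x (k + 1)) (lam k) (lam (k + 1)))
    (Mhat : Matrix (Fin m) (Fin m) ℝ)
    (hM : Mhat = fun i j => W i j - u j + α * (u i * u j))
    -- P̂ := P − D_Hᵀ(M ⊗ I)D_H − β D_Aᵀ(M ⊗ I)D_A is positive semidefinite:
    (hPhat : ∀ v : ∀ i : Fin m, Fin (n i) → ℝ,
      0 ≤ normPSq P v - quadKron Mhat H v - β * quadKron Mhat A v)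
    -- (x*, λ*) satisfies the KKT conditions:
    (xstar : ∀ i : Fin m, Fin (n i) → ℝ) (lamstar : Fin p → ℝ)
    (hkkt1 : blkMulVec A xstar = b)
    (hkkt2 : ∀ xx : ∀ i : Fin m, Fin (n i) → ℝ,
      Fobj H g xstar + ∑ i, ((A i)ᵀ *ᵥ lamstar) ⬝ᵥ (xx i - xstar i) ≤ Fobj H g xx) :
    ∀ k : ℕ, 1 ≤ k →
      (1 / (2 * ρ)) * ((lam (k + 1) - lamstar) ⬝ᵥ (lam (k + 1) - lamstar))
        + (1 / 2) * (normPSq P (x (k + 1) - xstar)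
            - normVSq W u
                ((fun i => H i *ᵥ (x (k + 1)) i) - fun i => H i *ᵥ xstar i)
            - β * normVSq W u
                ((fun i => A i *ᵥ (x (k + 1)) i) - fun i => A i *ᵥ xstar i))
      ≤ (1 / (2 * ρ)) * ((lam k - lamstar) ⬝ᵥ (lam k - lamstar))
        + (1 / 2) * (normPSq P (x k - xstar)
            - normVSq W u ((fun i => H i *ᵥ (x k) i) - fun i => H i *ᵥ xstar i)
            - β * normVSq W u
                ((fun i => A i *ᵥ (x k) i) - fun i => A i *ᵥ xstar i)) := by
  intro k hk
  obtain ⟨hmin, hlam⟩ := hiter k hk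
  subst hM
  have hprimal := primalLyapunov_descent hg hU hα (hρ.le.trans hβρ) hPhat hmin hkkt1 hkkt2
  set r := blkMulVec A (x (k + 1)) - b
  have hdual : lam (k + 1) - lamstar = (lam k - lamstar) - ρ • r := by rw [hlam]; abel
  have hdual_sq : 1 / (2 * ρ) * ((lam (k + 1) - lamstar) ⬝ᵥ (lam (k + 1) - lamstar))
      = 1 / (2 * ρ) * ((lam k - lamstar) ⬝ᵥ (lam k - lamstar)) - (lam k - lamstar) ⬝ᵥ r
        + ρ / 2 * (r ⬝ᵥ r) := by
    rw [hdual, dotProduct_sub_smul_self]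
    field_simp
  have hgap : 0 ≤ (β - ρ) * (r ⬝ᵥ r) :=
    mul_nonneg (sub_nonneg.2 hβρ) (dotProduct_self_nonneg _)
  change _ + 1 / 2 * primalLyapunov P H A W u β xstar (x (k + 1))
    ≤ _ + 1 / 2 * primalLyapunov P H A W u β xstar (x k)
  linarith

/-- One-step Lyapunov monotonicity (inequality (25)): for every `k ≥ 1`,
`(1/(2ρ))‖λ^{k+1} − λ*‖² + (1/2)(‖x^{k+1} − x*‖_P² − ‖y^{k+1} − y*‖_V² − β‖z^{k+1} − z*‖_V²)
 ≤ (1/(2ρ))‖λ^k − λ*‖² + (1/2)(‖x^k − x*‖_P² − ‖y^k − y*‖_V² − β‖z^k − z*‖_V²)`. -/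
theorem stmt_12 {m q p : ℕ} {n : Fin m → ℕ}
    (H : ∀ i : Fin m, Matrix (Fin q) (Fin (n i)) ℝ)
    (A : ∀ i : Fin m, Matrix (Fin p) (Fin (n i)) ℝ)
    (b : Fin p → ℝ)
    (g : ∀ i : Fin m, (Fin (n i) → ℝ) → ℝ)
    (hg : ∀ i : Fin m, ConvexOn ℝ Set.univ (g i))
    (P : ∀ i : Fin m, Matrix (Fin (n i)) (Fin (n i)) ℝ)
    (hP : ∀ i : Fin m, (P i).PosSemidef)
    (W : Matrix (Fin m) (Fin m) ℝ) (u : Fin m → ℝ)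
    (hW : ∀ i j : Fin m, i ≤ j → W i j = 1)              -- w_{ij} = 1 for j ≥ i
    (hU : ∀ i j : Fin m, W i j - u j = W j i - u i)       -- U := W − euᵀ symmetric
    (β ρ α : ℝ) (hρ : 0 < ρ) (hβρ : ρ ≤ β) (hα : 1 ≤ α)
    (x : ℕ → ∀ i : Fin m, Fin (n i) → ℝ) (lam : ℕ → Fin p → ℝ)
    (hiter : ∀ k : ℕ, 1 ≤ k →
      Iter H A b g P W β ρ (x k) (x (k + 1)) (lam k) (lam (k + 1)))
    (Mhat : Matrix (Fin m) (Fin m) ℝ)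
    (hM : Mhat = fun i j => W i j - u j + α * (u i * u j))
    -- P̂ := P − D_Hᵀ(M ⊗ I)D_H − β D_Aᵀ(M ⊗ I)D_A is positive semidefinite:
    (hPhat : ∀ v : ∀ i : Fin m, Fin (n i) → ℝ,
      0 ≤ normPSq P v - quadKron Mhat H v - β * quadKron Mhat A v)
    -- (x*, λ*) satisfies the KKT conditions:
    (xstar : ∀ i : Fin m, Fin (n i) → ℝ) (lamstar : Fin p → ℝ)
    (hkkt1 : blkMulVec A xstar = b)
    (hkkt2 : ∀ xx : ∀ i : Fin m, Fin (n i) → ℝ,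
      Fobj H g xstar + ∑ i, ((A i)ᵀ *ᵥ lamstar) ⬝ᵥ (xx i - xstar i) ≤ Fobj H g xx) :
    ∀ k : ℕ, 1 ≤ k →
      (1 / (2 * ρ)) * ((lam (k + 1) - lamstar) ⬝ᵥ (lam (k + 1) - lamstar))
        + (1 / 2) * (normPSq P (x (k + 1) - xstar)
            - normVSq W u
                ((fun i => H i *ᵥ (x (k + 1)) i) - fun i => H i *ᵥ xstar i)
            - β * normVSq W u
                ((fun i => A i *ᵥ (x (k + 1)) i) - fun i => A i *ᵥ xstar i))
      ≤ (1 / (2 * ρ)) * ((lam k - lamstar) ⬝ᵥ (lam k - lamstar))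
        + (1 / 2) * (normPSq P (x k - xstar)
            - normVSq W u ((fun i => H i *ᵥ (x k) i) - fun i => H i *ᵥ xstar i)
            - β * normVSq W u
                ((fun i => A i *ᵥ (x k) i) - fun i => A i *ᵥ xstar i)) :=
  stmt_12_general H A b g hg P W u hU β ρ α hρ hβρ hα x lam hiter Mhat hM hPhat xstar lamstar hkkt1
    hkkt2
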